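/- For every integer n > 0, the number of partitions of n into odd parts equals the number of partitions of n+1 that contain exactly one even part, where that even part is strictly greater than every other part of the partition. -/

import Mathlib

/-!
Raising one copy of the largest part by one maps a partition of `n` into odd parts to a partition
of `n + 1` whose only even part is its strict maximum: the old maximum `m` is odd and every other
part is odd and at most `m`, so below `m + 1`. Conversely, lowering the unique even part `e` of such
a partition by one gives back odd parts, all at most `e - 1`, which is therefore the new maximum.
-/

open Function

namespace Multiset

theorem sup_mem_of_ne_zero {α : Type*} [LinearOrder α] [OrderBot α] {s : Multiset α}
    (hs : s ≠ 0) : s.sup ∈ s := by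
  induction s using Multiset.induction_on with
  | empty => exact absurd rfl hs
  | cons a t ih =>
    rw [sup_cons]
    rcases eq_or_ne t 0 with rfl | ht
    · simp
    · exact sup_ind a t.sup (mem_cons_self a t) (mem_cons_of_mem (ih ht))

theorem sup_cons_of_forall_le {α : Type*} [SemilatticeSup α] [OrderBot α] {a : α}
    {s : Multiset α} (h : ∀ b ∈ s, b ≤ a) : (a ::ₘ s).sup = a := by
  rw [sup_cons, sup_eq_left.2 (Multiset.sup_le.2 h)]

theorem exists_eq_cons_forall_le {α : Type*} [LinearOrder α] [OrderBot α] {s : Multiset α}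
    (hs : s ≠ 0) : ∃ a t, s = a ::ₘ t ∧ ∀ b ∈ t, b ≤ a :=
  ⟨s.sup, s.erase s.sup, (cons_erase (sup_mem_of_ne_zero hs)).symm,
    fun _ hb => le_sup (mem_of_mem_erase hb)⟩

def succSup (s : Multiset ℕ) : Multiset ℕ :=
  (s.sup + 1) ::ₘ s.erase s.sup

theorem succSup_cons_of_forall_le {a : ℕ} {s : Multiset ℕ} (h : ∀ b ∈ s, b ≤ a) :
    succSup (a ::ₘ s) = (a + 1) ::ₘ s := by
  rw [succSup, sup_cons_of_forall_le h, erase_cons_head]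

theorem sum_succSup (s : Multiset ℕ) : (succSup s).sum = s.sum + 1 := by
  rcases eq_or_ne s 0 with rfl | hs
  · simp [succSup]
  · obtain ⟨a, t, rfl, hle⟩ := exists_eq_cons_forall_le hs
    rw [succSup_cons_of_forall_le hle, sum_cons, sum_cons]
    ring

theorem pos_of_mem_succSup {s : Multiset ℕ} (hpos : ∀ a ∈ s, 0 < a) {a : ℕ}
    (ha : a ∈ succSup s) : 0 < a := by
  rcases mem_cons.1 ha with rfl | ha
  · exact Nat.succ_pos _
  · exact hpos a (mem_of_mem_erase ha)

theorem succSup_injOn : Set.InjOn succSup {s | s ≠ 0} := by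
  intro s hs s' hs' h
  obtain ⟨a, t, rfl, hle⟩ := exists_eq_cons_forall_le hs
  obtain ⟨a', t', rfl, hle'⟩ := exists_eq_cons_forall_le hs'
  rw [succSup_cons_of_forall_le hle, succSup_cons_of_forall_le hle'] at h
  have hsup := congrArg Multiset.sup h
  rw [sup_cons_of_forall_le fun b hb => (hle b hb).trans a.le_succ,
    sup_cons_of_forall_le fun b hb => (hle' b hb).trans a'.le_succ] at hsup
  rw [Nat.succ_injective hsup] at h ⊢
  rw [(cons_inj_right _).1 h]

def HasUniqueEvenMax (s : Multiset ℕ) : Prop :=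
  (s.filter Even).card = 1 ∧ ∀ a ∈ s, Even a → ∀ b ∈ s, b ≠ a → b < a

theorem hasUniqueEvenMax_succSup {s : Multiset ℕ} (hs : s ≠ 0) (hodd : ∀ a ∈ s, Odd a) :
    HasUniqueEvenMax (succSup s) := by
  obtain ⟨a, t, rfl, hle⟩ := exists_eq_cons_forall_le hs
  have htodd : ∀ b ∈ t, ¬Even b := fun b hb => Nat.not_even_iff_odd.2 (hodd b (mem_cons_of_mem hb))
  have hsucc : Even (a + 1) := (hodd a (mem_cons_self a t)).add_one
  rw [succSup_cons_of_forall_le hle]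
  refine ⟨by rw [filter_cons_of_pos _ hsucc, filter_eq_nil.2 htodd]; rfl, ?_⟩
  intro e he heven b hb hbe
  obtain rfl : e = a + 1 := (mem_cons.1 he).resolve_right fun he => htodd e he heven
  exact Nat.lt_succ_of_le (hle b ((mem_cons.1 hb).resolve_left hbe))

theorem HasUniqueEvenMax.exists_eq_succSup {s : Multiset ℕ} (h : HasUniqueEvenMax s)
    (hpos : ∀ a ∈ s, 0 < a) : ∃ t, (∀ b ∈ t, Odd b) ∧ succSup t = s := by
  obtain ⟨hcard, hlt⟩ := h
  obtain ⟨e, he⟩ := card_eq_one.1 hcard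
  obtain ⟨hes, heven⟩ := mem_filter.1 (he ▸ mem_singleton_self e : e ∈ s.filter Even)
  set r := s.erase e
  have hs : e ::ₘ r = s := cons_erase hes
  have hrodd : ∀ b ∈ r, ¬Even b := by
    rw [← filter_eq_nil, ← cons_inj_right e]
    rw [← hs, filter_cons_of_pos _ heven] at he
    exact he
  obtain ⟨a, rfl⟩ : ∃ a, e = a + 1 := Nat.exists_eq_add_one.2 (hpos e hes)
  have haodd : Odd a := by simpa [Nat.even_add_one] using heven
  refine ⟨a ::ₘ r, ?_, ?_⟩
  · intro b hb
    rcases mem_cons.1 hb with rfl | hb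
    · exact haodd
    · exact Nat.not_even_iff_odd.1 (hrodd b hb)
  · rw [succSup_cons_of_forall_le, hs]
    intro b hb
    have hne : b ≠ a + 1 := fun hba => hrodd b hb (hba ▸ heven)
    exact Nat.le_of_lt_succ (hlt _ hes heven b (mem_of_mem_erase hb) hne)

end Multiset

namespace Nat.Partition

open Multiset

theorem parts_ne_zero {n : ℕ} (hn : n ≠ 0) (p : n.Partition) : p.parts ≠ 0 := by
  intro h
  apply hn
  rw [← p.parts_sum, h, sum_zero]

def succLargest {n : ℕ} (p : n.Partition) : (n + 1).Partition where
  parts := succSup p.parts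
  parts_pos := pos_of_mem_succSup fun _ => p.parts_pos
  parts_sum := by rw [sum_succSup, p.parts_sum]

theorem succLargest_injective {n : ℕ} (hn : n ≠ 0) :
    Injective (succLargest : n.Partition → (n + 1).Partition) :=
  fun p q h => Partition.ext <|
    succSup_injOn (parts_ne_zero hn p) (parts_ne_zero hn q) (congrArg parts h)

theorem exists_succLargest_eq {n : ℕ} (q : (n + 1).Partition) (hq : HasUniqueEvenMax q.parts) :
    ∃ p : n.Partition, (∀ a ∈ p.parts, Odd a) ∧ p.succLargest = q := by
  obtain ⟨t, hodd, ht⟩ := hq.exists_eq_succSup fun _ => q.parts_pos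
  have hsum : t.sum = n := by
    have := q.parts_sum
    rw [← ht, sum_succSup] at this
    omega
  exact ⟨⟨t, fun ha => (hodd _ ha).pos, hsum⟩, hodd, Partition.ext ht⟩

end Nat.Partition

open Nat.Partition Multiset in
/-- For every integer `n > 0`, the number of partitions of `n` into odd parts
equals the number of partitions of `n+1` containing exactly one even part,
that even part being strictly greater than every other part. -/
theorem odds_eq_one_even_part_succ (n : ℕ) (hn : 0 < n) :
    Nat.card {p : n.Partition // ∀ a ∈ p.parts, Odd a} =
    Nat.card {p : (n + 1).Partition //
      (p.parts.filter (fun a => Even a)).card = 1 ∧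
      ∀ a ∈ p.parts, Even a → ∀ b ∈ p.parts, b ≠ a → b < a} := by
  refine Nat.card_eq_of_bijective
    (fun p => ⟨p.1.succLargest, hasUniqueEvenMax_succSup (parts_ne_zero hn.ne' p.1) p.2⟩) ⟨?_, ?_⟩
  · intro p q h
    exact Subtype.ext (succLargest_injective hn.ne' (congrArg Subtype.val h))
  · rintro ⟨q, hq⟩
    obtain ⟨p, hodd, rfl⟩ := exists_succLargest_eq q hq
    exact ⟨⟨p, hodd⟩, rfl⟩
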